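/- Let φ : A → A' be an ℓ-isogeny of principally polarized abelian surfaces over ℂ, realized as the identity map on ℂ² inducing A(τ) → A(τ/ℓ) for some τ ∈ ℍ₂, with curve equations C, C' encoding bases of differentials via pullback matrices r, r' ∈ GL₂(ℂ) (so dφ = r′ᵗ r⁻ᵗ). Suppose the modular equations satisfy Ψ_{ℓ,n}(j(τ), j(τ/ℓ)) = 0 for n = 1,2,3 identically in τ, and that D_τJ(A,ω) = D_τJ(τ)·Sym²(rᵗ) for any basis ω with pullback matrix r. Then differentiating yields D Ψ_{ℓ,L}(j,j′)·D_τJ(τ) + (1/ℓ) DΨ_{ℓ,R}(j,j′)·D_τJ(τ/ℓ) = 0, and hence Sym²(dφ) = −ℓ · D_τJ(C′)⁻¹ · DΨ_{ℓ,R}(j,j′)⁻¹ · DΨ_{ℓ,L}(j,j′) · D_τJ(C), provided all four matrices DΨ_{ℓ,L}(j,j′), DΨ_{ℓ,R}(j,j′), D_τJ(C), D_τJ(C′) are invertible. -/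

import Mathlib

/-!
Composing the modular equations with `τ ↦ (j(τ), j(τ/ℓ))` gives a function that vanishes
identically, so its derivative vanishes. By the chain rule that derivative is
`DΨ_L · D_τJ(τ) + (1/ℓ) DΨ_R · D_τJ(τ/ℓ)`, the factor `1/ℓ` coming from the inner map `τ ↦ τ/ℓ`.
Substituting `D_τJ(τ) = D_τJ(C) Sym²(rᵗ)` and `D_τJ(τ/ℓ) = D_τJ(C') Sym²(r'ᵗ)` and solving for
`Sym²(r'ᵗ) Sym²(rᵗ)⁻¹`, which is `Sym²(dφ)` because `Sym²` is multiplicative, gives the formula.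
-/

open Matrix Complex

/-- The matrix of `Sym²(r)` in the basis `(x²,x,1)` for `r = [[a,b],[c,d]]`. -/
def sym2M (r : Matrix (Fin 2) (Fin 2) ℂ) : Matrix (Fin 3) (Fin 3) ℂ :=
  ![![r 0 0 ^ 2, r 0 0 * r 0 1, r 0 1 ^ 2],
    ![2 * r 0 0 * r 1 0, r 0 0 * r 1 1 + r 0 1 * r 1 0, 2 * r 0 1 * r 1 1],
    ![r 1 0 ^ 2, r 1 0 * r 1 1, r 1 1 ^ 2]]

theorem sym2M_mul (a b : Matrix (Fin 2) (Fin 2) ℂ) : sym2M (a * b) = sym2M a * sym2M b := by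
  ext i j
  simp only [Matrix.mul_apply, Fin.sum_univ_succ]
  fin_cases i <;> fin_cases j <;> simp [sym2M, Matrix.mul_apply, Fin.sum_univ_succ] <;> ring

theorem sym2M_one : sym2M 1 = 1 := by
  ext i j
  fin_cases i <;> fin_cases j <;> simp [sym2M]

theorem det_sym2M (a : Matrix (Fin 2) (Fin 2) ℂ) : (sym2M a).det = a.det ^ 3 := by
  rw [Matrix.det_fin_three, Matrix.det_fin_two]
  simp [sym2M]
  ring

-- No invertibility hypothesis: for singular `a` both inverses are the junk value `0`.
theorem sym2M_inv (a : Matrix (Fin 2) (Fin 2) ℂ) : sym2M a⁻¹ = (sym2M a)⁻¹ := by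
  by_cases ha : IsUnit a.det
  · exact (Matrix.inv_eq_right_inv (by rw [← sym2M_mul, a.mul_nonsing_inv ha, sym2M_one])).symm
  · have hs : ¬IsUnit (sym2M a).det := by rwa [det_sym2M, isUnit_pow_iff three_ne_zero]
    rw [a.nonsing_inv_apply_not_isUnit ha, (sym2M a).nonsing_inv_apply_not_isUnit hs]
    ext i j
    fin_cases i <;> fin_cases j <;> simp [sym2M]

section ChainRule

variable {𝕜 E F G : Type*} [NontriviallyNormedField 𝕜]
  [NormedAddCommGroup E] [NormedSpace 𝕜 E] [NormedAddCommGroup F] [NormedSpace 𝕜 F]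
  [NormedAddCommGroup G] [NormedSpace 𝕜 G]

theorem fderiv_comp_add_smul_fderiv_comp_eq_zero {f : E → F} {Ψ : F × F → G} {c : 𝕜} {p : E}
    (hf : DifferentiableAt 𝕜 f p) (hfc : DifferentiableAt 𝕜 f (c • p))
    (hΨ : DifferentiableAt 𝕜 Ψ (f p, f (c • p))) (h : ∀ q, Ψ (f q, f (c • q)) = 0) :
    (fderiv 𝕜 (fun x => Ψ (x, f (c • p))) (f p)).comp (fderiv 𝕜 f p) +
      c • (fderiv 𝕜 (fun y => Ψ (f p, y)) (f (c • p))).comp (fderiv 𝕜 f (c • p)) = 0 := by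
  set L := fderiv 𝕜 Ψ (f p, f (c • p))
  have hfst : fderiv 𝕜 (fun x => Ψ (x, f (c • p))) (f p) = L.comp (.inl 𝕜 F F) :=
    (hΨ.hasFDerivAt.comp (f p) (hasFDerivAt_prodMk_left (f p) (f (c • p)))).fderiv
  have hsnd : fderiv 𝕜 (fun y => Ψ (f p, y)) (f (c • p)) = L.comp (.inr 𝕜 F F) :=
    (hΨ.hasFDerivAt.comp (f (c • p)) (hasFDerivAt_prodMk_right (f p) (f (c • p)))).fderiv
  have hscale : HasFDerivAt (fun q => f (c • q)) (c • fderiv 𝕜 f (c • p)) p := by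
    simpa [Function.comp_def] using hfc.hasFDerivAt.comp p ((hasFDerivAt_id p).const_smul c)
  have hchain : HasFDerivAt (fun q => Ψ (f q, f (c • q)))
      (L.comp ((fderiv 𝕜 f p).prod (c • fderiv 𝕜 f (c • p)))) p :=
    hΨ.hasFDerivAt.comp p (hf.hasFDerivAt.prodMk hscale)
  have hzero : HasFDerivAt (fun q => Ψ (f q, f (c • q))) (0 : E →L[𝕜] G) p := by
    simpa only [h] using hasFDerivAt_const (0 : G) p
  rw [hfst, hsnd, ← hchain.unique hzero]
  ext v
  simp [← L.map_smul, ← L.map_add]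

end ChainRule

section Jacobian

variable {𝕜 : Type*} [NontriviallyNormedField 𝕜] {k m n : Type*} [Fintype n] [DecidableEq n]

noncomputable def jacobian (f : (n → 𝕜) → m → 𝕜) (x : n → 𝕜) : Matrix m n 𝕜 :=
  LinearMap.toMatrix' (fderiv 𝕜 f x : (n → 𝕜) →ₗ[𝕜] m → 𝕜)

theorem jacobian_apply {f : (n → 𝕜) → m → 𝕜} {x : n → 𝕜}
    (hf : ∀ i, DifferentiableAt 𝕜 (fun y => f y i) x) (i : m) (j : n) :
    jacobian f x i j = fderiv 𝕜 (fun y => f y i) x (Pi.single j 1) := by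
  rw [jacobian, LinearMap.toMatrix'_apply, fderiv_pi hf]
  rfl

theorem jacobian_mul_add_smul_jacobian_mul_eq_zero [Fintype k] [Fintype m] [DecidableEq m]
    {f : (n → 𝕜) → m → 𝕜} {Ψ : (m → 𝕜) × (m → 𝕜) → k → 𝕜} {c : 𝕜} {p : n → 𝕜}
    (hf : DifferentiableAt 𝕜 f p) (hfc : DifferentiableAt 𝕜 f (c • p))
    (hΨ : DifferentiableAt 𝕜 Ψ (f p, f (c • p))) (h : ∀ q, Ψ (f q, f (c • q)) = 0) :
    jacobian (fun x => Ψ (x, f (c • p))) (f p) * jacobian f p +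
      c • (jacobian (fun y => Ψ (f p, y)) (f (c • p)) * jacobian f (c • p)) = 0 := by
  have := congrArg (fun T : (n → 𝕜) →L[𝕜] k → 𝕜 => LinearMap.toMatrix' (T : (n → 𝕜) →ₗ[𝕜] k → 𝕜))
    (fderiv_comp_add_smul_fderiv_comp_eq_zero hf hfc hΨ h)
  simpa [jacobian, LinearMap.toMatrix'_comp] using this

end Jacobian

theorem mul_inv_eq_neg_smul_of_add_inv_smul_eq_zero {K n : Type*} [Field K] [Fintype n]
    [DecidableEq n] {A B J J' S S' : Matrix n n K} {ℓ : K} (hℓ : ℓ ≠ 0)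
    (h : A * J + ℓ⁻¹ • (B * J') = 0) (hB : IsUnit B.det) (hJ' : IsUnit (J' * S'⁻¹).det) :
    S' * S⁻¹ = (-ℓ) • ((J' * S'⁻¹)⁻¹ * B⁻¹ * A * (J * S⁻¹)) := by
  rw [det_mul, IsUnit.mul_iff, isUnit_nonsing_inv_det_iff] at hJ'
  have hAJ : A * J = -(ℓ⁻¹ • (B * J')) := eq_neg_of_add_eq_zero_left h
  calc S' * S⁻¹ = (ℓ * ℓ⁻¹) • (S' * (J'⁻¹ * (B⁻¹ * B) * J') * S⁻¹) := by
        rw [mul_inv_cancel₀ hℓ, nonsing_inv_mul _ hB, Matrix.mul_one,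
          nonsing_inv_mul _ hJ'.1, Matrix.mul_one, one_smul]
    _ = (-ℓ) • ((J' * S'⁻¹)⁻¹ * B⁻¹ * A * (J * S⁻¹)) := by
        rw [Matrix.mul_inv_rev, nonsing_inv_nonsing_inv _ hJ'.2]
        simp only [Matrix.mul_assoc]
        rw [← Matrix.mul_assoc A J, hAJ]
        simp only [Matrix.mul_neg, Matrix.mul_smul, Matrix.smul_mul, Matrix.mul_assoc, smul_neg,
          smul_smul, neg_mul, neg_smul, neg_neg]

theorem stmt_17_general (ℓ : ℕ) (hℓ : Nat.Prime ℓ)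
    (jfun : (Fin 3 → ℂ) → (Fin 3 → ℂ))
    (Ψ : Fin 3 → ((Fin 3 → ℂ) × (Fin 3 → ℂ)) → ℂ)
    (hjdiff : ∀ kk : Fin 3, Differentiable ℂ fun q => jfun q kk)
    (hΨdiff : ∀ n : Fin 3, Differentiable ℂ (Ψ n))
    (hmodeq : ∀ (q : Fin 3 → ℂ) (n : Fin 3), Ψ n (jfun q, jfun fun i => q i / ℓ) = 0)
    (p : Fin 3 → ℂ)
    (r r' : Matrix (Fin 2) (Fin 2) ℂ) :
    let sdiv : (Fin 3 → ℂ) → Fin 3 → ℂ := fun q i => q i / ℓ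
    let Jmat : (Fin 3 → ℂ) → Matrix (Fin 3) (Fin 3) ℂ := fun q =>
      Matrix.of fun kk l =>
        (1 / (2 * (Real.pi : ℂ) * Complex.I)) *
          fderiv ℂ (fun w => jfun w kk) q (Pi.single l 1) * (if l = 1 then 1 else 2)
    let DL : Matrix (Fin 3) (Fin 3) ℂ := Matrix.of fun n kk =>
      fderiv ℂ (fun x => Ψ n (x, jfun (sdiv p))) (jfun p) (Pi.single kk 1)
    let DR : Matrix (Fin 3) (Fin 3) ℂ := Matrix.of fun n kk =>
      fderiv ℂ (fun y => Ψ n (jfun p, y)) (jfun (sdiv p)) (Pi.single kk 1)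
    -- `D_τJ(C)` and `D_τJ(C')`, defined by `D_τJ(τ) = D_τJ(C)·Sym²(rᵗ)`
    let DJC : Matrix (Fin 3) (Fin 3) ℂ := Jmat p * (sym2M rᵀ)⁻¹
    let DJC' : Matrix (Fin 3) (Fin 3) ℂ := Jmat (sdiv p) * (sym2M r'ᵀ)⁻¹
    let dφ : Matrix (Fin 2) (Fin 2) ℂ := r'ᵀ * (rᵀ)⁻¹
    (DL * Jmat p + ((ℓ : ℂ))⁻¹ • (DR * Jmat (sdiv p)) = 0) ∧
    (IsUnit DL.det → IsUnit DR.det → IsUnit DJC.det → IsUnit DJC'.det →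
      sym2M dφ = (-(ℓ : ℂ)) • (DJC'⁻¹ * DR⁻¹ * DL * DJC)) := by
  intro sdiv Jmat DL DR DJC DJC' dφ
  have hsdiv : ∀ q, sdiv q = (ℓ : ℂ)⁻¹ • q := fun q => funext fun i => div_eq_inv_mul (q i) ℓ
  set Ψv : (Fin 3 → ℂ) × (Fin 3 → ℂ) → Fin 3 → ℂ := fun z n => Ψ n z
  have hΨv : Differentiable ℂ Ψv := differentiable_pi.mpr hΨdiff
  have hj : Differentiable ℂ jfun := differentiable_pi.mpr hjdiff
  have hJmat : ∀ q, Jmat q = jacobian jfun q *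
      diagonal fun l => 1 / (2 * (Real.pi : ℂ) * I) * if l = 1 then 1 else 2 := by
    intro q
    ext kk l
    rw [mul_diagonal, jacobian_apply fun i => (hjdiff i).differentiableAt]
    simp only [Jmat, of_apply]
    ring
  have hDL : DL = jacobian (fun x => Ψv (x, jfun ((ℓ : ℂ)⁻¹ • p))) (jfun p) := by
    ext n kk
    rw [jacobian_apply fun n => by fun_prop, ← hsdiv]
    rfl
  have hDR : DR = jacobian (fun y => Ψv (jfun p, y)) (jfun ((ℓ : ℂ)⁻¹ • p)) := by
    ext n kk
    rw [jacobian_apply fun n => by fun_prop, ← hsdiv]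
    rfl
  have hmod : ∀ q, Ψv (jfun q, jfun ((ℓ : ℂ)⁻¹ • q)) = 0 := fun q =>
    funext fun n => by rw [← hsdiv]; exact hmodeq q n
  have hderiv : DL * Jmat p + (ℓ : ℂ)⁻¹ • (DR * Jmat (sdiv p)) = 0 := by
    rw [hJmat, hJmat, hDL, hDR, hsdiv, ← Matrix.mul_assoc, ← Matrix.mul_assoc, ← Matrix.smul_mul,
      ← Matrix.add_mul, jacobian_mul_add_smul_jacobian_mul_eq_zero (hj _) (hj _) (hΨv _) hmod,
      Matrix.zero_mul]
  refine ⟨hderiv, fun _ hDR_det _ hDJC'_det => ?_⟩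
  rw [sym2M_mul, sym2M_inv]
  exact mul_inv_eq_neg_smul_of_add_inv_smul_eq_zero (Nat.cast_ne_zero.mpr hℓ.ne_zero) hderiv
    hDR_det hDJC'_det

/-- Let `φ : A → A'` be an `ℓ`-isogeny realized over `ℂ` as
`A(τ) → A(τ/ℓ)`, with curve equations `C, C'` encoding bases of differentials
via pullback matrices `r, r'` (so `dφ = r'ᵗ r⁻ᵗ`, and
`D_τJ(C) = D_τJ(τ)·Sym²(rᵗ)⁻¹`… i.e. `D_τJ(τ) = D_τJ(C)·Sym²(rᵗ)`).  If the
modular equations `Ψ_{ℓ,n}(j(τ), j(τ/ℓ)) = 0` hold identically, then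
differentiating yields
`DΨ_L(j,j')·D_τJ(τ) + (1/ℓ)·DΨ_R(j,j')·D_τJ(τ/ℓ) = 0`, and hence
`Sym²(dφ) = −ℓ·D_τJ(C')⁻¹·DΨ_R⁻¹·DΨ_L·D_τJ(C)` provided the four matrices are
invertible.  Here `ℍ₂` is coordinatized by `(τ₁,τ₂,τ₃) ∈ ℂ³`, `jfun` are the
Igusa invariants, and `D_τJ` is the matrix of their `(1/2πi)`-normalized
derivatives in the directions `v₁, v₂, v₃` (weights `2,1,2`). -/
theorem stmt_17 (ℓ : ℕ) (hℓ : Nat.Prime ℓ)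
    (jfun : (Fin 3 → ℂ) → (Fin 3 → ℂ))
    (Ψ : Fin 3 → ((Fin 3 → ℂ) × (Fin 3 → ℂ)) → ℂ)
    (hjdiff : ∀ kk : Fin 3, Differentiable ℂ fun q => jfun q kk)
    (hΨdiff : ∀ n : Fin 3, Differentiable ℂ (Ψ n))
    (hmodeq : ∀ (q : Fin 3 → ℂ) (n : Fin 3), Ψ n (jfun q, jfun fun i => q i / ℓ) = 0)
    (p : Fin 3 → ℂ)
    (r r' : Matrix (Fin 2) (Fin 2) ℂ) (hr : IsUnit r.det) (hr' : IsUnit r'.det) :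
    let sdiv : (Fin 3 → ℂ) → Fin 3 → ℂ := fun q i => q i / ℓ
    let Jmat : (Fin 3 → ℂ) → Matrix (Fin 3) (Fin 3) ℂ := fun q =>
      Matrix.of fun kk l =>
        (1 / (2 * (Real.pi : ℂ) * Complex.I)) *
          fderiv ℂ (fun w => jfun w kk) q (Pi.single l 1) * (if l = 1 then 1 else 2)
    let DL : Matrix (Fin 3) (Fin 3) ℂ := Matrix.of fun n kk =>
      fderiv ℂ (fun x => Ψ n (x, jfun (sdiv p))) (jfun p) (Pi.single kk 1)
    let DR : Matrix (Fin 3) (Fin 3) ℂ := Matrix.of fun n kk =>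
      fderiv ℂ (fun y => Ψ n (jfun p, y)) (jfun (sdiv p)) (Pi.single kk 1)
    -- `D_τJ(C)` and `D_τJ(C')`, defined by `D_τJ(τ) = D_τJ(C)·Sym²(rᵗ)`
    let DJC : Matrix (Fin 3) (Fin 3) ℂ := Jmat p * (sym2M rᵀ)⁻¹
    let DJC' : Matrix (Fin 3) (Fin 3) ℂ := Jmat (sdiv p) * (sym2M r'ᵀ)⁻¹
    let dφ : Matrix (Fin 2) (Fin 2) ℂ := r'ᵀ * (rᵀ)⁻¹
    (DL * Jmat p + ((ℓ : ℂ))⁻¹ • (DR * Jmat (sdiv p)) = 0) ∧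
    (IsUnit DL.det → IsUnit DR.det → IsUnit DJC.det → IsUnit DJC'.det →
      sym2M dφ = (-(ℓ : ℂ)) • (DJC'⁻¹ * DR⁻¹ * DL * DJC)) :=
  stmt_17_general ℓ hℓ jfun Ψ hjdiff hΨdiff hmodeq p r r'
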